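/- arXiv:1909.05791 — 2 statements merged into one kernel-verified Lean document; each statement's English description precedes it below -/
import Mathlib

section
/- For n = 3, the function H⁽³⁾(τ) = 2√(τ₂² + τ₃²) is convex on Sym(3,ℝ), where τ₁, τ₂, τ₃ are the eigenvalues of τ ordered so that |τ₁| ≤ |τ₂| ≤ |τ₃|. -/
/-! `H⁽³⁾(τ) / 2` is a Ky Fan norm: it is the maximum of `√(‖τ v‖² + ‖τ w‖²)` over orthonormal
pairs `(v, w)`. Indeed, in an eigenbasis of `τ` this quantity is `√(∑ λᵢ² pᵢ)` with weights
`pᵢ = ⟪bᵢ, v⟫² + ⟪bᵢ, w⟫²` that lie in `[0, 1]` by Bessel and sum to `2` by Parseval, so it is at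
most the ℓ² norm of the two largest eigenvalues, with equality for the corresponding eigenvectors.
Each of these functions is the norm of a linear image of `τ`, hence convex, and a pointwise
maximum of convex functions is convex. -/

noncomputable def frob {n : ℕ} (τ : Matrix (Fin n) (Fin n) ℝ) : ℝ :=
  Real.sqrt (∑ i, ∑ j, (τ i j) ^ 2)

/-- `|τ₁|`: the smallest of the absolute values of the eigenvalues of a symmetric `3×3` matrix. -/
noncomputable def t1 (τ : Matrix (Fin 3) (Fin 3) ℝ) : ℝ :=
  if h : τ.IsHermitian then min (min |h.eigenvalues 0| |h.eigenvalues 1|) |h.eigenvalues 2| else 0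

/-- `|τ₃|`: the largest of the absolute values of the eigenvalues. -/
noncomputable def t3 (τ : Matrix (Fin 3) (Fin 3) ℝ) : ℝ :=
  if h : τ.IsHermitian then max (max |h.eigenvalues 0| |h.eigenvalues 1|) |h.eigenvalues 2| else 0

/-- `|τ₂|`: the middle of the absolute values of the eigenvalues. -/
noncomputable def t2 (τ : Matrix (Fin 3) (Fin 3) ℝ) : ℝ :=
  (if h : τ.IsHermitian then |h.eigenvalues 0| + |h.eigenvalues 1| + |h.eigenvalues 2| else 0)
    - t1 τ - t3 τ

/-- `ρ⁽³⁾` as defined in the paper. -/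
noncomputable def rho3 (τ : Matrix (Fin 3) (Fin 3) ℝ) : ℝ :=
  if t1 τ + t2 τ ≤ t3 τ then (1 / 2) * Real.sqrt ((t1 τ + t2 τ) ^ 2 + (t3 τ) ^ 2)
  else (1 / (2 * Real.sqrt 2)) * (t1 τ + t2 τ + t3 τ)

/-- the quasiconvexified integrand `h_λ` for `n = 3`. -/
noncomputable def hlam3 (lam : ℝ) (τ : Matrix (Fin 3) (Fin 3) ℝ) : ℝ :=
  if Real.sqrt lam ≤ rho3 τ then (frob τ) ^ 2 / Real.sqrt lam + Real.sqrt lam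
  else if t1 τ + t2 τ ≤ t3 τ then
    2 * (Real.sqrt ((t1 τ + t2 τ) ^ 2 + (t3 τ) ^ 2) - t1 τ * t2 τ / Real.sqrt lam)
  else Real.sqrt 2 * (t1 τ + t2 τ + t3 τ)
    + ((1 / 2) * (frob τ) ^ 2 - (t1 τ * t2 τ + t1 τ * t3 τ + t2 τ * t3 τ)) / Real.sqrt lam

/-- `H⁽³⁾(τ) = 2√(τ₂² + τ₃²)` where `|τ₁| ≤ |τ₂| ≤ |τ₃|` are the eigenvalues of `τ`
ordered by absolute value. -/
noncomputable def H3 (τ : Matrix (Fin 3) (Fin 3) ℝ) : ℝ :=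
  2 * Real.sqrt ((t2 τ) ^ 2 + (t3 τ) ^ 2)

open Matrix RealInnerProductSpace

lemma sum_mul_le_sum_sub_mul {ι : Type*} [Fintype ι] {a p : ι → ℝ} {m : ℝ}
    (hm : ∀ i, m ≤ a i) (hp : ∀ i, p i ≤ 1) :
    ∑ i, a i * p i ≤ ∑ i, a i - (Fintype.card ι - ∑ i, p i) * m := by
  have h : ∑ i, (a i - m) * p i ≤ ∑ i, (a i - m) :=
    Finset.sum_le_sum fun i _ => mul_le_of_le_one_right (sub_nonneg.2 (hm i)) (hp i)
  simp only [sub_mul, Finset.sum_sub_distrib, ← Finset.mul_sum, Finset.sum_const,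
    Finset.card_univ, nsmul_eq_mul] at h
  linarith

namespace Matrix.IsHermitian

variable {n : Type*} [Fintype n] [DecidableEq n] {A : Matrix n n ℝ} (hA : A.IsHermitian)

lemma toEuclideanLin_eigenvectorBasis (j : n) :
    toEuclideanLin A (hA.eigenvectorBasis j) = hA.eigenvalues j • hA.eigenvectorBasis j :=
  congrArg (WithLp.toLp 2) (hA.mulVec_eigenvectorBasis j)

lemma inner_eigenvectorBasis_toEuclideanLin (j : n) (x : EuclideanSpace ℝ n) :
    ⟪hA.eigenvectorBasis j, toEuclideanLin A x⟫
      = hA.eigenvalues j * ⟪hA.eigenvectorBasis j, x⟫ := by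
  rw [← isSymmetric_toEuclideanLin_iff.mpr hA, hA.toEuclideanLin_eigenvectorBasis,
    real_inner_smul_left]

lemma norm_toEuclideanLin_sq (x : EuclideanSpace ℝ n) :
    ‖toEuclideanLin A x‖ ^ 2 = ∑ i, hA.eigenvalues i ^ 2 * ⟪hA.eigenvectorBasis i, x⟫ ^ 2 := by
  simp only [← hA.eigenvectorBasis.sum_sq_inner_right, hA.inner_eigenvectorBasis_toEuclideanLin,
    mul_pow]

lemma sum_norm_toEuclideanLin_sq_le {ι : Type*} [Fintype ι] {v : ι → EuclideanSpace ℝ n}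
    (hv : Orthonormal ℝ v) {m : ℝ} (hm : ∀ i, m ≤ hA.eigenvalues i ^ 2) :
    ∑ k, ‖toEuclideanLin A (v k)‖ ^ 2
      ≤ ∑ i, hA.eigenvalues i ^ 2 - (Fintype.card n - Fintype.card ι) * m := by
  set b := hA.eigenvectorBasis
  have hp : ∀ i, ∑ k, ⟪b i, v k⟫ ^ 2 ≤ 1 := fun i => by
    simpa [real_inner_comm, b.orthonormal.1 i] using hv.sum_inner_products_le (b i) (s := .univ)
  have hsum : ∑ i, ∑ k, ⟪b i, v k⟫ ^ 2 = Fintype.card ι := by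
    rw [Finset.sum_comm]
    simp [b.sum_sq_inner_right, hv.1]
  calc ∑ k, ‖toEuclideanLin A (v k)‖ ^ 2
      = ∑ i, hA.eigenvalues i ^ 2 * ∑ k, ⟪b i, v k⟫ ^ 2 := by
        simp only [hA.norm_toEuclideanLin_sq, Finset.mul_sum]
        exact Finset.sum_comm
    _ ≤ _ := by
        have := sum_mul_le_sum_sub_mul hm hp
        rwa [hsum] at this

lemma sum_norm_toEuclideanLin_eigenvectorBasis_succAbove_sq {d : ℕ}
    {A : Matrix (Fin (d + 1)) (Fin (d + 1)) ℝ} (hA : A.IsHermitian) (j : Fin (d + 1)) :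
    ∑ k, ‖toEuclideanLin A (hA.eigenvectorBasis (j.succAbove k))‖ ^ 2
      = ∑ i, hA.eigenvalues i ^ 2 - hA.eigenvalues j ^ 2 := by
  simp [Fin.sum_univ_succAbove _ j, hA.toEuclideanLin_eigenvectorBasis, norm_smul,
    hA.eigenvectorBasis.orthonormal.1]

end Matrix.IsHermitian

lemma convexOn_sqrt_sum_norm_toEuclideanLin_sq {n ι : Type*} [Fintype n] [DecidableEq n]
    [Fintype ι] (v : ι → EuclideanSpace ℝ n) :
    ConvexOn ℝ Set.univ fun A : Matrix n n ℝ => √(∑ k, ‖toEuclideanLin A (v k)‖ ^ 2) := by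
  let L : Matrix n n ℝ →ₗ[ℝ] PiLp 2 fun _ : ι => EuclideanSpace ℝ n :=
    (WithLp.linearEquiv 2 ℝ _).symm.toLinearMap ∘ₗ
      LinearMap.pi fun k => LinearMap.applyₗ (v k) ∘ₗ toEuclideanLin.toLinearMap
  have hL : (fun A : Matrix n n ℝ => √(∑ k, ‖toEuclideanLin A (v k)‖ ^ 2)) = fun A => ‖L A‖ := by
    ext A
    simp [L, PiLp.norm_eq_of_L2]
  rw [hL]
  exact (convexOn_norm convex_univ).comp_linearMap L

lemma sq_mid_add_sq_max (a b c : ℝ) :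
    (a + b + c - min (min a b) c - max (max a b) c) ^ 2 + max (max a b) c ^ 2
      = a ^ 2 + b ^ 2 + c ^ 2 - min (min a b) c ^ 2 := by
  simp only [min_def, max_def]
  split_ifs <;>
    first | ring1 | nlinarith [sq_nonneg (a - b), sq_nonneg (b - c), sq_nonneg (a - c)]

section SymmetricThreeByThree

variable {τ : Matrix (Fin 3) (Fin 3) ℝ}

lemma t1_le_abs_eigenvalues (hτ : τ.IsHermitian) (i : Fin 3) : t1 τ ≤ |hτ.eigenvalues i| := by
  rw [t1, dif_pos hτ]
  fin_cases i <;> simp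

lemma exists_abs_eigenvalues_eq_t1 (hτ : τ.IsHermitian) : ∃ j, |hτ.eigenvalues j| = t1 τ := by
  rw [t1, dif_pos hτ]
  rcases min_choice (min |hτ.eigenvalues 0| |hτ.eigenvalues 1|) |hτ.eigenvalues 2| with h | h <;>
    rw [h]
  · rcases min_choice |hτ.eigenvalues 0| |hτ.eigenvalues 1| with h' | h' <;> rw [h'] <;>
      exact ⟨_, rfl⟩
  · exact ⟨_, rfl⟩

lemma t2_sq_add_t3_sq (hτ : τ.IsHermitian) :
    t2 τ ^ 2 + t3 τ ^ 2 = ∑ i, hτ.eigenvalues i ^ 2 - t1 τ ^ 2 := by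
  simp only [t1, t2, t3, dif_pos hτ, sq_mid_add_sq_max, Fin.sum_univ_three, sq_abs]

lemma sum_norm_toEuclideanLin_sq_le_t2_sq_add_t3_sq (hτ : τ.IsHermitian)
    {v : Fin 2 → EuclideanSpace ℝ (Fin 3)} (hv : Orthonormal ℝ v) :
    ∑ k, ‖toEuclideanLin τ (v k)‖ ^ 2 ≤ t2 τ ^ 2 + t3 τ ^ 2 := by
  have hm : ∀ i, t1 τ ^ 2 ≤ hτ.eigenvalues i ^ 2 := fun i => by
    have ht1 : 0 ≤ t1 τ := by rw [t1, dif_pos hτ]; positivity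
    rw [← sq_abs (hτ.eigenvalues i)]
    exact pow_le_pow_left₀ ht1 (t1_le_abs_eigenvalues hτ i) 2
  calc _ ≤ ∑ i, hτ.eigenvalues i ^ 2
          - (Fintype.card (Fin 3) - Fintype.card (Fin 2)) * t1 τ ^ 2 :=
        hτ.sum_norm_toEuclideanLin_sq_le hv hm
    _ = t2 τ ^ 2 + t3 τ ^ 2 := by
        rw [t2_sq_add_t3_sq hτ]
        norm_num

lemma exists_orthonormal_sum_norm_toEuclideanLin_sq_eq (hτ : τ.IsHermitian) :
    ∃ v : Fin 2 → EuclideanSpace ℝ (Fin 3), Orthonormal ℝ v ∧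
      ∑ k, ‖toEuclideanLin τ (v k)‖ ^ 2 = t2 τ ^ 2 + t3 τ ^ 2 := by
  obtain ⟨j, hj⟩ := exists_abs_eigenvalues_eq_t1 hτ
  refine ⟨_, hτ.eigenvectorBasis.orthonormal.comp _ (Fin.succAbove_right_injective (p := j)), ?_⟩
  rw [Function.comp_def, hτ.sum_norm_toEuclideanLin_eigenvectorBasis_succAbove_sq,
    t2_sq_add_t3_sq hτ, ← hj, sq_abs]

end SymmetricThreeByThree

/-- `H⁽³⁾` is convex on the symmetric `3×3` matrices. -/
theorem H3_convex (A B : Matrix (Fin 3) (Fin 3) ℝ) (hA : A.IsHermitian)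
    (hB : B.IsHermitian) (t : ℝ) (ht0 : 0 ≤ t) (ht1 : t ≤ 1) :
    H3 (t • A + (1 - t) • B) ≤ t * H3 A + (1 - t) * H3 B := by
  have hτ : (t • A + (1 - t) • B).IsHermitian :=
    (hA.smul (IsSelfAdjoint.all t)).add (hB.smul (IsSelfAdjoint.all _))
  obtain ⟨v, hv, hτv⟩ := exists_orthonormal_sum_norm_toEuclideanLin_sq_eq hτ
  have hconv := (convexOn_sqrt_sum_norm_toEuclideanLin_sq v).2 (Set.mem_univ A) (Set.mem_univ B)
    ht0 (sub_nonneg.2 ht1) (add_sub_cancel t 1)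
  simp only [smul_eq_mul] at hconv
  have ht1' : 0 ≤ 1 - t := sub_nonneg.2 ht1
  calc H3 (t • A + (1 - t) • B)
      = 2 * √(∑ k, ‖toEuclideanLin (t • A + (1 - t) • B) (v k)‖ ^ 2) := by rw [H3, hτv]
    _ ≤ 2 * (t * √(∑ k, ‖toEuclideanLin A (v k)‖ ^ 2)
          + (1 - t) * √(∑ k, ‖toEuclideanLin B (v k)‖ ^ 2)) :=
        mul_le_mul_of_nonneg_left hconv zero_le_two
    _ ≤ 2 * (t * √(t2 A ^ 2 + t3 A ^ 2) + (1 - t) * √(t2 B ^ 2 + t3 B ^ 2)) := by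
        gcongr
        · exact sum_norm_toEuclideanLin_sq_le_t2_sq_add_t3_sq hA hv
        · exact sum_norm_toEuclideanLin_sq_le_t2_sq_add_t3_sq hB hv
    _ = t * H3 A + (1 - t) * H3 B := by rw [H3, H3]; ring
end

section
/- For n = 3 and every λ > 0, the quasiconvexified integrand h_λ restricted to the hyperplane {τ₁ = 0} dominates H⁽³⁾: if τ ∈ Sym(3,ℝ) has smallest-in-absolute-value eigenvalue τ₁ = 0, then 2√(τ₂² + τ₃²) ≤ h_λ(τ). -/
private lemma tri_sq_aux (a b c : ℝ) :
    (min (min a b) c)^2 + (a+b+c - min (min a b) c - max (max a b) c)^2 + (max (max a b) c)^2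
      = a^2+b^2+c^2 := by
  rcases le_total a b with h1|h1 <;> rcases le_total b c with h2|h2 <;>
    rcases le_total a c with h3|h3 <;>
    simp [min_def, max_def, h1, h2, h3]
  all_goals try ring
  all_goals (have e1 : a = c := by linarith
             have e2 : a = b := by linarith
             rw [← e1, ← e2]; ring)

private lemma tri_mid_le_aux (a b c : ℝ) :
    a+b+c - min (min a b) c - max (max a b) c ≤ max (max a b) c := by
  rcases le_total a b with h1|h1 <;> rcases le_total b c with h2|h2 <;>
    rcases le_total a c with h3|h3 <;>
    simp [min_def, max_def, h1, h2, h3] <;> linarith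

private lemma frob_sq_eq_aux (τ : Matrix (Fin 3) (Fin 3) ℝ) (hτ : τ.IsHermitian) :
    ∑ i, ∑ j, (τ i j)^2 = ∑ i, (hτ.eigenvalues i)^2 := by
  have h1 : ∑ i, ∑ j, (τ i j)^2 = (τ * τ).trace := by
    simp [Matrix.trace, Matrix.mul_apply, Matrix.diag]
    congr 1; ext i; congr 1; ext j
    have := hτ.apply j i
    simp at this
    rw [← this]; ring
  set U := (hτ.eigenvectorUnitary : Matrix (Fin 3) (Fin 3) ℝ) with hUdef
  set D := Matrix.diagonal (RCLike.ofReal ∘ hτ.eigenvalues : Fin 3 → ℝ) with hDdef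
  have hU : star U * U = 1 := Unitary.coe_star_mul_self _
  have hs : τ = U * D * star U := hτ.spectral_theorem
  have h2 : τ * τ = U * (D * D) * star U := by
    rw [hs, show U * D * star U * (U * D * star U) = U * (D * ((star U * U) * D)) * star U by
      simp only [Matrix.mul_assoc], hU]
    simp [Matrix.mul_assoc]
  rw [h1, h2, Matrix.trace_mul_cycle, hU, Matrix.one_mul, hDdef,
    Matrix.diagonal_mul_diagonal, Matrix.trace_diagonal]
  simp [sq]

/-- for `n = 3`, `λ > 0` and symmetric `τ` whose smallest-in-absolute-value
eigenvalue vanishes, `2√(τ₂² + τ₃²) ≤ h_λ(τ)`. -/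
theorem H3_le_hlam3_on_waveCone (lam : ℝ) (hlam_pos : 0 < lam)
    (τ : Matrix (Fin 3) (Fin 3) ℝ) (hτ : τ.IsHermitian) (h1 : t1 τ = 0) :
    2 * Real.sqrt ((t2 τ) ^ 2 + (t3 τ) ^ 2) ≤ hlam3 lam τ := by
  set a := |hτ.eigenvalues 0| with ha
  set b := |hτ.eigenvalues 1| with hb
  set c := |hτ.eigenvalues 2| with hc
  have ht1 : t1 τ = min (min a b) c := by rw [t1, dif_pos hτ]
  have ht3 : t3 τ = max (max a b) c := by rw [t3, dif_pos hτ]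
  have ht2 : t2 τ = a + b + c - t1 τ - t3 τ := by rw [t2, dif_pos hτ]
  -- key: ordering condition
  have hcond : t1 τ + t2 τ ≤ t3 τ := by
    have h := tri_mid_le_aux a b c
    rw [← ht1, ← ht3] at h
    rw [ht2]
    linarith
  -- key: Frobenius norm identity
  have hfrob : (frob τ) ^ 2 = (t2 τ)^2 + (t3 τ)^2 := by
    have hnn : (0:ℝ) ≤ ∑ i, ∑ j, (τ i j)^2 :=
      Finset.sum_nonneg fun i _ => Finset.sum_nonneg fun j _ => sq_nonneg _
    have : (frob τ)^2 = ∑ i, ∑ j, (τ i j)^2 := Real.sq_sqrt hnn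
    rw [this, frob_sq_eq_aux τ hτ]
    have hsum : ∑ i, (hτ.eigenvalues i)^2 = a^2 + b^2 + c^2 := by
      rw [Fin.sum_univ_three, ha, hb, hc, sq_abs, sq_abs, sq_abs]
    rw [hsum, ← tri_sq_aux a b c, ← ht1, ← ht3]
    have ht2' : t2 τ = a + b + c - min (min a b) c - max (max a b) c := by
      rw [ht2, ht1, ht3]
    rw [← ht2', ← ht1, h1] at *
    ring_nf
    rw [ht2, ht1, ht3, h1]
    ring
  have ht3nn : 0 ≤ t3 τ := by
    rw [ht3]; exact le_trans (abs_nonneg _) (le_max_of_le_left (le_max_left _ _))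
  have hG : (0:ℝ) ≤ (t2 τ)^2 + (t3 τ)^2 := by positivity
  have hs : 0 < Real.sqrt lam := Real.sqrt_pos.mpr hlam_pos
  rw [hlam3]
  split_ifs with hA
  · -- case A : AM-GM
    rw [hfrob]
    have key := sq_nonneg (Real.sqrt ((t2 τ)^2 + (t3 τ)^2) - Real.sqrt lam)
    have hsq : (Real.sqrt ((t2 τ)^2 + (t3 τ)^2))^2 = (t2 τ)^2 + (t3 τ)^2 :=
      Real.sq_sqrt hG
    rw [div_add' _ _ _ (ne_of_gt hs), le_div_iff₀ hs]
    nlinarith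
  · rw [h1]
    simp
end
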